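/- arXiv:2507.01700 — 3 statements merged into one kernel-verified Lean document; each statement's English description precedes it below -/
import Mathlib

section
/- Let G be a mixed graph with directed and bidirected edges that is ancestral (no directed cycles and no almost directed cycles), and let {G_σ} be a family of mixed graphs such that every path of G appears in some G_σ and every path of every G_σ appears in G. Then every G_σ is ancestral. -/
theorem stmt2_general {V S : Type*} (Dir Bi : V → V → Prop) (DirS BiS : S → V → V → Prop)
    (hNoDirCycle : ¬ ∃ a, Relation.TransGen Dir a a)
    (hNoAlmostCycle : ¬ ∃ a b, Bi a b ∧ Relation.TransGen Dir a b)
    (hPathUp : ∀ s a b, Relation.TransGen (DirS s) a b → Relation.TransGen Dir a b)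
    (hBiUp : ∀ s a b, BiS s a b → Bi a b) :
    ∀ s, (¬ ∃ a, Relation.TransGen (DirS s) a a) ∧
      (¬ ∃ a b, BiS s a b ∧ Relation.TransGen (DirS s) a b) := fun s =>
  ⟨fun ⟨a, hCycle⟩ => hNoDirCycle ⟨a, hPathUp s a a hCycle⟩,
    fun ⟨a, b, hBi, hPath⟩ => hNoAlmostCycle ⟨a, b, hBiUp s a b hBi, hPathUp s a b hPath⟩⟩

/-- If a mixed graph G (directed + bidirected edges) is ancestral
(no directed cycle, no almost directed cycle), and every path/bidirected edge of G
appears in some member of the family {G_σ} and conversely, then every G_σ is ancestral. -/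
theorem stmt2 {V S : Type*} (Dir Bi : V → V → Prop) (DirS BiS : S → V → V → Prop)
    (hNoDirCycle : ¬ ∃ a, Relation.TransGen Dir a a)
    (hNoAlmostCycle : ¬ ∃ a b, Bi a b ∧ Relation.TransGen Dir a b)
    (hPathUp : ∀ s a b, Relation.TransGen (DirS s) a b → Relation.TransGen Dir a b)
    (hPathDown : ∀ a b, Relation.TransGen Dir a b → ∃ s, Relation.TransGen (DirS s) a b)
    (hBiUp : ∀ s a b, BiS s a b → Bi a b)
    (hBiDown : ∀ a b, Bi a b → ∃ s, BiS s a b) :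
    ∀ s, (¬ ∃ a, Relation.TransGen (DirS s) a a) ∧
      (¬ ∃ a b, BiS s a b ∧ Relation.TransGen (DirS s) a b) :=
  stmt2_general Dir Bi DirS BiS hNoDirCycle hNoAlmostCycle hPathUp hBiUp
end

section
/- If an undirected graph U is chordal, then for every edge {A,B} of U there exist two acyclic orientations of U, each having no unshielded collider, such that one orients the edge as A→B and the other as A←B. -/
/-- An undirected graph is chordal: every cycle of length at least 4 has a chord,
i.e. an edge between two vertices of the cycle that is not an edge of the cycle. -/
def ChordalGraph {V : Type*} (G : SimpleGraph V) : Prop :=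
  ∀ ⦃v : V⦄ (c : G.Walk v v), c.IsCycle → 4 ≤ c.length →
    ∃ a b, a ∈ c.support ∧ b ∈ c.support ∧ G.Adj a b ∧ s(a, b) ∉ c.edges

/-- D is an orientation of the undirected graph G: each edge receives exactly one direction. -/
def IsOrientationOf {V : Type*} (G : SimpleGraph V) (D : V → V → Prop) : Prop :=
  (∀ a b, D a b → G.Adj a b) ∧ (∀ a b, G.Adj a b → (D a b ∨ D b a)) ∧
  (∀ a b, D a b → ¬ D b a)

/-- The directed relation D is acyclic. -/
def AcyclicRel {V : Type*} (D : V → V → Prop) : Prop :=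
  ¬ ∃ a, Relation.TransGen D a a

/-- D has an unshielded collider a → b ← c with a, c non-adjacent in G. -/
def HasUnshieldedCollider {V : Type*} (G : SimpleGraph V) (D : V → V → Prop) : Prop :=
  ∃ a b c, D a b ∧ D c b ∧ a ≠ c ∧ ¬ G.Adj a c

/-!
Dirac's lemma: in a finite chordal graph, a clique `K` that misses some vertex of `S` misses a
vertex of `S` that is simplicial in the subgraph induced on `S`. If `S` is not a clique, pick
non-adjacent `a, b` and an inclusion-minimal `a`–`b` separator `T`. Every vertex of `T` has
neighbours in the components of `a` and of `b`, so two non-adjacent vertices of `T` would close a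
chordless cycle of length at least 4 through both components; hence `T` is a clique. `K` avoids
one of the two components, and induction applied to that component together with `T` yields a
simplicial vertex of the component, which is simplicial in `S` as well.

Removing simplicial vertices other than `A` one at a time ranks every finite vertex set so that
each vertex's later neighbours form a clique and `A` comes last. An ultrafilter on the finite
vertex sets glues these rankings into a perfect elimination order of the whole graph with `A`
last. Orienting every edge towards its earlier endpoint gives an acyclic orientation, and a
collider `a → b ← c` makes `a` and `c` later neighbours of `b`, hence adjacent. Taking `A`, resp.
`B`, last orients the edge `{A, B}` as `A → B`, resp. `B → A`.
-/

namespace SimpleGraph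

variable {V : Type*} {G : SimpleGraph V}

namespace Walk

lemma exists_shorter_of_append {x a b y : V} (q : G.Walk x a) (r : G.Walk a y)
    (hb : b ∈ r.support) (hab : G.Adj a b) (he : s(a, b) ∉ (q.append r).edges) :
    ∃ p : G.Walk x y, p.support ⊆ (q.append r).support ∧ p.length < (q.append r).length := by
  obtain ⟨r₁, r₂, rfl⟩ := r.mem_support_iff_exists_append.mp hb
  refine ⟨q.append (cons hab r₂), ?_, ?_⟩
  · intro z hz
    rw [mem_support_append_iff, support_cons, List.mem_cons] at hz
    rw [mem_support_append_iff, mem_support_append_iff]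
    rcases hz with hz | rfl | hz
    · exact .inl hz
    · exact .inl q.end_mem_support
    · exact .inr (.inr hz)
  · cases r₁ with
    | nil => exact absurd rfl hab.ne
    | cons h r₁ =>
      cases r₁ with
      | nil => simp [edges_append] at he
      | cons => simp only [length_append, length_cons]; omega

lemma exists_shorter_of_isChord {x y : V} {p : G.Walk x y} {e : Sym2 V} (he : p.IsChord e) :
    ∃ p' : G.Walk x y, p'.support ⊆ p.support ∧ p'.length < p.length := by
  induction e using Sym2.ind with | _ a b => ?_
  obtain ⟨hab, he, ha, hb⟩ := isChord_sym2Mk.mp he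
  obtain ⟨q, r, rfl⟩ := p.mem_support_iff_exists_append.mp ha
  rcases (mem_support_append_iff _ _).mp hb with hbq | hbr
  · obtain ⟨q₁, q₂, rfl⟩ := q.mem_support_iff_exists_append.mp hbq
    rw [← append_assoc] at he ⊢
    have ha' : a ∈ (q₂.append r).support :=
      (mem_support_append_iff _ _).mpr (.inr r.start_mem_support)
    exact exists_shorter_of_append q₁ (q₂.append r) ha' hab.symm (by rwa [Sym2.eq_swap])
  · exact exists_shorter_of_append q r hbr hab he

lemma exists_isPath_isChordless_support_subset {x y : V} (p : G.Walk x y) :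
    ∃ q : G.Walk x y, q.IsPath ∧ q.IsChordless ∧ q.support ⊆ p.support := by
  classical
  obtain ⟨q, hqp, hmin⟩ := (measure (length (G := G) (u := x) (v := y))).wf.has_min
    {q | q.support ⊆ p.support} ⟨p, List.Subset.refl _⟩
  have hmin' : ∀ q' : G.Walk x y, q'.support ⊆ q.support → q.length ≤ q'.length :=
    fun q' hq' => not_lt.mp (hmin q' (List.Subset.trans hq' hqp))
  refine ⟨q.bypass, q.bypass_isPath, fun e he => ?_,
    List.Subset.trans (support_bypass_subset_support _) hqp⟩
  obtain ⟨q', hq', hlt⟩ := exists_shorter_of_isChord he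
  have := hmin' q' (List.Subset.trans hq' (support_bypass_subset_support _))
  have := q.length_bypass_le_length
  omega

lemma two_le_length {x y : V} (p : G.Walk x y) (hxy : x ≠ y) (hnadj : ¬ G.Adj x y) :
    2 ≤ p.length := by
  by_contra! h
  interval_cases hp : p.length
  · exact hxy (p.eq_of_length_eq_zero hp)
  · exact hnadj (p.adj_of_length_eq_one hp)

lemma IsPath.isCycle_append_reverse {x y : V} {p q : G.Walk x y} (hp : p.IsPath)
    (hq : q.IsPath) (hxy : x ≠ y) (hnadj : ¬ G.Adj x y)
    (hpq : ∀ z ∈ p.support, z ∈ q.support → z = x ∨ z = y) :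
    (p.append q.reverse).IsCycle := by
  have hxy' : ∀ u v, u = x ∨ u = y → v = x ∨ v = y → ¬ G.Adj u v := by
    rintro u v (rfl | rfl) (rfl | rfl) h
    exacts [h.ne rfl, hnadj h, hnadj h.symm, h.ne rfl]
  rw [isCycle_def, isTrail_append, tail_support_append, List.nodup_append]
  refine ⟨⟨hp.isTrail, hq.reverse.isTrail, fun e hep heq => ?_⟩, fun h => hxy ?_,
    hp.support_nodup.sublist (List.tail_sublist _),
    hq.reverse.support_nodup.sublist (List.tail_sublist _), fun z hzp z' hzq hzz => ?_⟩
  · induction e using Sym2.ind with | _ u v => ?_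
    rw [edges_reverse, List.mem_reverse] at heq
    exact hxy' u v
      (hpq u (p.fst_mem_support_of_mem_edges hep) (q.fst_mem_support_of_mem_edges heq))
      (hpq v (p.snd_mem_support_of_mem_edges hep) (q.snd_mem_support_of_mem_edges heq))
      (p.adj_of_mem_edges hep)
  · exact (by simpa using congrArg length h : p.Nil ∧ q.Nil).1.eq
  · subst hzz
    have hx := (List.nodup_cons.mp (p.cons_tail_support ▸ hp.support_nodup)).1
    have hy := (List.nodup_cons.mp (q.reverse.cons_tail_support ▸ hq.reverse.support_nodup)).1
    have hzq' : z ∈ q.support := by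
      simpa using List.mem_of_mem_tail hzq
    rcases hpq z (List.mem_of_mem_tail hzp) hzq' with rfl | rfl
    exacts [hx hzp, hy hzq]

end Walk

theorem _root_.ChordalGraph.adj_of_walks (hG : ChordalGraph G) {x y : V} {C₁ C₂ : Set V}
    (hdisj : Disjoint C₁ C₂) (hC : ∀ u ∈ C₁, ∀ v ∈ C₂, ¬ G.Adj u v) (hxy : x ≠ y)
    (p₁ p₂ : G.Walk x y) (hp₁ : ∀ z ∈ p₁.support, z = x ∨ z = y ∨ z ∈ C₁)
    (hp₂ : ∀ z ∈ p₂.support, z = x ∨ z = y ∨ z ∈ C₂) : G.Adj x y := by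
  by_contra hnadj
  obtain ⟨q₁, hq₁, hc₁, hs₁⟩ := p₁.exists_isPath_isChordless_support_subset
  obtain ⟨q₂, hq₂, hc₂, hs₂⟩ := p₂.exists_isPath_isChordless_support_subset
  have hmem₁ : ∀ z ∈ q₁.support, z ∉ q₂.support → z ∈ C₁ := fun z hz hz₂ => by
    rcases hp₁ z (hs₁ hz) with rfl | rfl | h
    exacts [absurd q₂.start_mem_support hz₂, absurd q₂.end_mem_support hz₂, h]
  have hmem₂ : ∀ z ∈ q₂.support, z ∉ q₁.support → z ∈ C₂ := fun z hz hz₁ => by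
    rcases hp₂ z (hs₂ hz) with rfl | rfl | h
    exacts [absurd q₁.start_mem_support hz₁, absurd q₁.end_mem_support hz₁, h]
  have hcommon : ∀ z ∈ q₁.support, z ∈ q₂.support → z = x ∨ z = y := by
    intro z hz₁ hz₂
    rcases hp₁ z (hs₁ hz₁) with h | h | h₁
    · exact .inl h
    · exact .inr h
    rcases hp₂ z (hs₂ hz₂) with h | h | h₂
    exacts [.inl h, .inr h, absurd h₂ (Set.disjoint_left.mp hdisj h₁)]
  set c := q₁.append q₂.reverse
  have hc4 : 4 ≤ c.length := by
    simp only [c, Walk.length_append, Walk.length_reverse]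
    linarith [q₁.two_le_length hxy hnadj, q₂.two_le_length hxy hnadj]
  obtain ⟨u, v, hu, hv, huv, hne⟩ :=
    hG c (hq₁.isCycle_append_reverse hq₂ hxy hnadj hcommon) hc4
  have hedges : ∀ e, e ∈ q₁.edges ∨ e ∈ q₂.edges → e ∈ c.edges := by simp [c]
  have hacross (u v : V) (hu : u ∈ q₁.support) (hv : v ∈ q₂.support) (huv : G.Adj u v) :
      s(u, v) ∈ c.edges := by
    by_cases hu₂ : u ∈ q₂.support
    · exact hedges _ (.inr (hc₂.mem_edges hu₂ hv huv))
    by_cases hv₁ : v ∈ q₁.support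
    · exact hedges _ (.inl (hc₁.mem_edges hu hv₁ huv))
    exact absurd huv (hC u (hmem₁ u hu hu₂) v (hmem₂ v hv hv₁))
  simp only [c, Walk.mem_support_append_iff, Walk.support_reverse, List.mem_reverse] at hu hv
  apply hne
  rcases hu with hu | hu <;> rcases hv with hv | hv
  · exact hedges _ (.inl (hc₁.mem_edges hu hv huv))
  · exact hacross u v hu hv huv
  · exact Sym2.eq_swap ▸ hacross v u hv hu huv.symm
  · exact hedges _ (.inr (hc₂.mem_edges hu hv huv))

def ReachableIn (G : SimpleGraph V) (W : Set V) : V → V → Prop :=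
  Relation.ReflTransGen fun u v => G.Adj u v ∧ u ∈ W ∧ v ∈ W

namespace ReachableIn

variable {W : Set V} {u v w : V}

lemma refl : G.ReachableIn W u u := Relation.ReflTransGen.refl

lemma single (h : G.Adj u v) (hu : u ∈ W) (hv : v ∈ W) : G.ReachableIn W u v :=
  Relation.ReflTransGen.single ⟨h, hu, hv⟩

lemma trans (h₁ : G.ReachableIn W u v) (h₂ : G.ReachableIn W v w) : G.ReachableIn W u w :=
  Relation.ReflTransGen.trans h₁ h₂

lemma symm (h : G.ReachableIn W u v) : G.ReachableIn W v u := by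
  induction h with
  | refl => exact refl
  | tail _ step ih => exact (single step.1.symm step.2.2 step.2.1).trans ih

lemma mem (h : G.ReachableIn W u v) (hu : u ∈ W) : v ∈ W := by
  induction h with
  | refl => exact hu
  | tail _ step => exact step.2.2

lemma exists_walk (h : G.ReachableIn W u v) :
    ∃ p : G.Walk u v, ∀ z ∈ p.support, G.ReachableIn W u z := by
  induction h with
  | refl => exact ⟨.nil, by simpa using refl⟩
  | tail huv step ih =>
    obtain ⟨p, hp⟩ := ih
    refine ⟨p.concat step.1, fun z hz => ?_⟩
    rw [Walk.support_concat, List.mem_append, List.mem_singleton] at hz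
    rcases hz with hz | rfl
    exacts [hp z hz, huv.tail step]

lemma of_insert {t : V} (h : G.ReachableIn (insert t W) u v) (hu : u ∈ W) :
    G.ReachableIn W u v ∨ ∃ z, G.ReachableIn W u z ∧ G.Adj z t := by
  induction h with
  | refl => exact .inl refl
  | tail _ step ih =>
    obtain ⟨hadj, -, hw⟩ := step
    rcases ih with ih | ih
    · rcases Set.mem_insert_iff.mp hw with rfl | hw
      · exact .inr ⟨_, ih, hadj⟩
      · exact .inl (ih.trans (single hadj (ih.mem hu) hw))
    · exact .inr ih

lemma not_of_subset_pair (hW : W ⊆ {u, v}) (huv : u ≠ v) (hadj : ¬ G.Adj u v) :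
    ¬ G.ReachableIn W u v := by
  intro h
  rcases h.cases_head with h | ⟨w, ⟨huw, -, hw⟩, -⟩
  · exact huv h
  · rcases hW hw with rfl | rfl
    exacts [huw.ne rfl, hadj huw]

end ReachableIn

lemma exists_walk_of_reachableIn {W : Set V} {s x y zx zy : V} (hx : G.ReachableIn W s zx)
    (hy : G.ReachableIn W s zy) (hxzx : G.Adj x zx) (hzyy : G.Adj zy y) :
    ∃ p : G.Walk x y, ∀ z ∈ p.support, z = x ∨ z = y ∨ G.ReachableIn W s z := by
  obtain ⟨p, hp⟩ := (hx.symm.trans hy).exists_walk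
  refine ⟨.cons hxzx (p.concat hzyy), fun z hz => ?_⟩
  rw [Walk.support_cons, Walk.support_concat, List.mem_cons, List.mem_append,
    List.mem_singleton] at hz
  rcases hz with rfl | hz | rfl
  exacts [.inl rfl, .inr (.inr (hx.trans (hp z hz))), .inr (.inl rfl)]

theorem _root_.ChordalGraph.isClique_of_reachableIn_insert
    (hG : ChordalGraph G) {W T : Set V} {a b : V} (ha : a ∈ W) (hb : b ∈ W)
    (hab : ¬ G.ReachableIn W a b) (hT : ∀ t ∈ T, G.ReachableIn (insert t W) a b) :
    G.IsClique T := by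
  have hnbr : ∀ t ∈ T, ∀ s ∈ ({a, b} : Set V),
      ∃ z, G.ReachableIn W s z ∧ G.Adj z t := by
    intro t ht s hs
    rcases hs with rfl | rfl
    · exact ((hT t ht).of_insert ha).resolve_left hab
    · exact ((hT t ht).symm.of_insert hb).resolve_left (fun h => hab h.symm)
  have hwalk : ∀ x ∈ T, ∀ y ∈ T, ∀ s ∈ ({a, b} : Set V),
      ∃ p : G.Walk x y, ∀ z ∈ p.support, z = x ∨ z = y ∨ G.ReachableIn W s z := by
    intro x hx y hy s hs
    obtain ⟨zx, hzx, hzxx⟩ := hnbr x hx s hs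
    obtain ⟨zy, hzy, hzyy⟩ := hnbr y hy s hs
    exact exists_walk_of_reachableIn hzx hzy hzxx.symm hzyy
  intro x hx y hy hxy
  obtain ⟨p₁, hp₁⟩ := hwalk x hx y hy a (by simp)
  obtain ⟨p₂, hp₂⟩ := hwalk x hx y hy b (by simp)
  refine hG.adj_of_walks (C₁ := {z | G.ReachableIn W a z}) (C₂ := {z | G.ReachableIn W b z})
    (Set.disjoint_left.mpr fun z hza hzb => hab (hza.trans hzb.symm)) (fun u hu v hv huv => ?_)
    hxy p₁ p₂ hp₁ hp₂
  exact hab (hu.trans ((ReachableIn.single huv (hu.mem ha) (hv.mem hb)).trans hv.symm))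

lemma exists_minimal_separator (S : Finset V) {a b : V} (hab : a ≠ b) (hnadj : ¬ G.Adj a b) :
    ∃ T ⊆ S, a ∉ T ∧ b ∉ T ∧ ¬ G.ReachableIn (↑S \ ↑T) a b ∧
      ∀ t ∈ T, G.ReachableIn (insert t (↑S \ ↑T)) a b := by
  classical
  obtain ⟨T, hTle, hT⟩ := exists_minimal_le_of_wellFoundedLT
    (fun T : Finset V => ¬ G.ReachableIn (↑S \ ↑T) a b) (S \ {a, b})
    (ReachableIn.not_of_subset_pair (fun z hz => by simp_all) hab hnadj)
  have hTS : T ⊆ S := hTle.trans Finset.sdiff_subset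
  refine ⟨T, hTS, fun h => by simpa using hTle h, fun h => by simpa using hTle h, hT.prop,
    fun t ht => ?_⟩
  have hset : insert t ((S : Set V) \ T) = ↑S \ ↑(T.erase t) := by
    have htS : t ∈ S := hTS ht
    ext z
    by_cases hzt : z = t <;> simp [hzt, htS]
  rw [hset]
  exact not_not.mp (hT.not_prop_of_lt (Finset.erase_ssubset ht))

lemma exists_simplicial_of_not_reachableIn {S T : Finset V}
    (hS : ∀ S' ⊂ S, ¬ (↑S' ⊆ (T : Set V)) →
      ∃ v ∈ S', v ∉ T ∧ G.IsClique (G.neighborSet v ∩ S'))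
    {s s' : V} (hs : s ∈ S) (hsT : s ∉ T) (hs' : s' ∈ S) (hs'T : s' ∉ T)
    (hss' : ¬ G.ReachableIn (↑S \ ↑T) s s') :
    ∃ v, G.ReachableIn (↑S \ ↑T) s v ∧ G.IsClique (G.neighborSet v ∩ S) := by
  classical
  set S₁ := S.filter fun z => z ∈ T ∨ G.ReachableIn (↑S \ ↑T) s z
  have hS₁ : S₁ ⊂ S := Finset.filter_ssubset.mpr ⟨s', hs', by tauto⟩
  have hsS₁ : s ∈ S₁ := by simp [S₁, hs, ReachableIn.refl]
  obtain ⟨v, hvS₁, hvT, hv⟩ := hS S₁ hS₁ fun h => hsT (h hsS₁)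
  have hsv : G.ReachableIn (↑S \ ↑T) s v := by simp_all [S₁]
  refine ⟨v, hsv, hv.subset ?_⟩
  rintro z ⟨hvz, hzS : z ∈ S⟩
  simp only [S₁, Finset.coe_filter]
  exact ⟨hvz, hzS, or_iff_not_imp_left.mpr fun hzT =>
    hsv.trans (ReachableIn.single hvz (hsv.mem ⟨hs, hsT⟩) ⟨hzS, hzT⟩)⟩

theorem _root_.ChordalGraph.exists_simplicial_notMem
    (hG : ChordalGraph G) (S : Finset V) {K : Set V} (hK : G.IsClique K) (hSK : ¬ (↑S ⊆ K)) :
    ∃ v ∈ S, v ∉ K ∧ G.IsClique (G.neighborSet v ∩ S) := by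
  induction S using Finset.strongInduction generalizing K with | H S ih => ?_
  by_cases hS : G.IsClique (S : Set V)
  · obtain ⟨v, hvS, hvK⟩ := Set.not_subset.mp hSK
    exact ⟨v, hvS, hvK, hS.subset Set.inter_subset_right⟩
  obtain ⟨a, ha, b, hb, hab, hnadj⟩ : ∃ a ∈ S, ∃ b ∈ S, a ≠ b ∧ ¬ G.Adj a b := by
    simpa [IsClique, Set.Pairwise] using hS
  obtain ⟨T, -, haT, hbT, hsep, hmin⟩ := exists_minimal_separator S hab hnadj
  have haW : a ∈ (↑S \ ↑T : Set V) := ⟨ha, haT⟩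
  have hbW : b ∈ (↑S \ ↑T : Set V) := ⟨hb, hbT⟩
  have hT : G.IsClique (T : Set V) := hG.isClique_of_reachableIn_insert haW hbW hsep hmin
  have hside : ∀ s ∈ (↑S \ ↑T : Set V), ∀ s' ∈ (↑S \ ↑T : Set V),
      ¬ G.ReachableIn (↑S \ ↑T) s s' → (∀ z ∈ K, ¬ G.ReachableIn (↑S \ ↑T) s z) →
      ∃ v ∈ S, v ∉ K ∧ G.IsClique (G.neighborSet v ∩ S) := by
    intro s hs s' hs' hss' hsK
    obtain ⟨v, hsv, hv⟩ := exists_simplicial_of_not_reachableIn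
      (fun S' hS' hS'T => ih S' hS' hT hS'T) hs.1 hs.2 hs'.1 hs'.2 hss'
    exact ⟨v, (hsv.mem hs).1, fun hvK => hsK v hvK hsv, hv⟩
  by_cases haK : ∃ z ∈ K, G.ReachableIn (↑S \ ↑T) a z
  · obtain ⟨z, hzK, haz⟩ := haK
    refine hside b hbW a haW (fun h => hsep h.symm) fun z' hz'K hbz' => hsep ?_
    rcases eq_or_ne z z' with rfl | hzz'
    · exact haz.trans hbz'.symm
    · exact haz.trans ((ReachableIn.single (hK hzK hz'K hzz') (haz.mem haW)
        (hbz'.mem hbW)).trans hbz'.symm)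
  · exact hside a haW b hbW hsep fun z hzK haz => haK ⟨z, hzK, haz⟩

theorem _root_.ChordalGraph.exists_elimination_rank
    (hG : ChordalGraph G) (S : Finset V) {A : V} (hA : A ∈ S) :
    ∃ f : V → ℕ, Set.InjOn f S ∧ (∀ v ∈ S, f v ≤ f A) ∧
      ∀ v ∈ S, G.IsClique (G.neighborSet v ∩ {w | w ∈ S ∧ f v < f w}) := by
  classical
  induction S using Finset.strongInduction with | H S ih => ?_
  by_cases hSA : S = {A}
  · subst hSA
    refine ⟨fun _ => 0, by simp, by simp, fun v _ => ?_⟩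
    simp
  obtain ⟨x, hxS, hxA, hx⟩ := hG.exists_simplicial_notMem S (G.isClique_singleton A)
    fun h => hSA (Finset.coe_subset_singleton.mp h |>.antisymm (by simpa using hA))
  obtain ⟨g, hginj, hgA, hg⟩ := ih (S.erase x) (Finset.erase_ssubset hxS)
    (Finset.mem_erase.mpr ⟨fun h => hxA h.symm, hA⟩)
  refine ⟨fun v => if v = x then 0 else g v + 1, ?_, ?_, ?_⟩
  · intro u hu v hv huv
    by_cases hux : u = x <;> by_cases hvx : v = x <;>
      simp only [hux, hvx, ite_true, ite_false] at huv
    · exact hux.trans hvx.symm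
    · omega
    · omega
    · exact hginj (Finset.mem_erase_of_ne_of_mem hux hu) (Finset.mem_erase_of_ne_of_mem hvx hv)
        (by omega)
  · intro v hv
    have : A ≠ x := fun h => hxA h.symm
    by_cases hvx : v = x
    · simp [hvx]
    · simpa [hvx, this] using hgA v (Finset.mem_erase.mpr ⟨hvx, hv⟩)
  · intro v hv
    by_cases hvx : v = x
    · subst hvx
      refine hx.subset ?_
      rintro w ⟨hvw, hwS, -⟩
      exact ⟨hvw, hwS⟩
    · refine (hg v (Finset.mem_erase.mpr ⟨hvx, hv⟩)).subset ?_
      rintro w ⟨hvw, hwS, hlt⟩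
      have hwx : w ≠ x := by rintro rfl; simp [hvx] at hlt
      simp only [hvx, hwx, if_false] at hlt
      exact ⟨hvw, Finset.mem_erase.mpr ⟨hwx, hwS⟩, by omega⟩

variable {r : V → V → Prop}

def IsPerfectEliminationOrder (G : SimpleGraph V) (r : V → V → Prop) : Prop :=
  ∀ v, G.IsClique (G.neighborSet v ∩ {w | r v w})

def orient (G : SimpleGraph V) (r : V → V → Prop) : V → V → Prop :=
  fun u v => G.Adj u v ∧ r v u

lemma isOrientationOf_orient [IsStrictTotalOrder V r] : IsOrientationOf G (G.orient r) := by
  refine ⟨fun _ _ h => h.1, fun u v huv => ?_, fun u v h h' => asymm h.2 h'.2⟩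
  rcases trichotomous_of r u v with h | h | h
  exacts [.inr ⟨huv.symm, h⟩, absurd h huv.ne, .inl ⟨huv, h⟩]

lemma acyclicRel_orient [IsStrictOrder V r] : AcyclicRel (G.orient r) := by
  rintro ⟨u, hu⟩
  suffices ∀ v, Relation.TransGen (G.orient r) u v → r v u from irrefl u (this u hu)
  intro v h
  induction h with
  | single h => exact h.2
  | tail _ h ih => exact _root_.trans h.2 ih

lemma IsPerfectEliminationOrder.not_hasUnshieldedCollider_orient
    (hr : G.IsPerfectEliminationOrder r) : ¬ HasUnshieldedCollider G (G.orient r) := by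
  rintro ⟨a, b, c, ⟨hab, hba⟩, ⟨hcb, hbc⟩, hac, hnadj⟩
  exact hnadj (hr b ⟨hab.symm, hba⟩ ⟨hcb.symm, hbc⟩ hac)

open Filter in
theorem _root_.ChordalGraph.exists_perfectEliminationOrder
    (hG : ChordalGraph G) (A : V) :
    ∃ r : V → V → Prop, IsStrictTotalOrder V r ∧ G.IsPerfectEliminationOrder r ∧
      ∀ v ≠ A, r v A := by
  classical
  choose f hinj hA hf using fun S : Finset V =>
    hG.exists_elimination_rank (insert A S) (Finset.mem_insert_self A S)
  let 𝒰 : Ultrafilter (Finset V) := .of atTop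
  have hmem : ∀ v, ∀ᶠ S in (𝒰 : Filter (Finset V)), v ∈ insert A S := fun v =>
    Ultrafilter.of_le atTop <| (eventually_ge_atTop {v}).mono fun S hS =>
      Finset.mem_insert_of_mem (hS (Finset.mem_singleton_self v))
  refine ⟨fun u v => ∀ᶠ S in (𝒰 : Filter (Finset V)), f S u < f S v, ?_, ?_, ?_⟩
  · have htri (u v : V) (hnlt : ¬ ∀ᶠ S in (𝒰 : Filter (Finset V)), f S u < f S v)
        (hngt : ¬ ∀ᶠ S in (𝒰 : Filter (Finset V)), f S v < f S u) : u = v := by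
      by_contra huv
      have hne : ∀ᶠ S in (𝒰 : Filter (Finset V)), f S u < f S v ∨ f S v < f S u := by
        filter_upwards [hmem u, hmem v] with S hu hv
        exact lt_or_gt_of_ne fun h => huv (hinj S hu hv h)
      exact (Ultrafilter.eventually_or.mp hne).elim hnlt hngt
    exact { trichotomous := htri
            irrefl u h := by obtain ⟨S, hS⟩ := h.exists; exact lt_irrefl _ hS
            trans u v w huv hvw := (huv.and hvw).mono fun S h => h.1.trans h.2 }
  · intro v a ⟨hva, ha⟩ c ⟨hvc, hc⟩ hac
    obtain ⟨S, hv, ha', hc', hlta, hltc⟩ :=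
      ((hmem v).and ((hmem a).and ((hmem c).and (ha.and hc)))).exists
    exact hf S v hv ⟨hva, ha', hlta⟩ ⟨hvc, hc', hltc⟩ hac
  · intro v hv
    filter_upwards [hmem v] with S hS
    exact (hA S v hS).lt_of_ne fun h => hv (hinj S hS (Finset.mem_insert_self A S) h)

end SimpleGraph

/-- If U is chordal then for every edge {A,B} there exist two acyclic
orientations of U without unshielded colliders, one orienting A→B, the other A←B. -/
theorem stmt4 {V : Type*} (U : SimpleGraph V) (hchordal : ChordalGraph U)
    {A B : V} (hAB : U.Adj A B) :
    ∃ D₁ D₂ : V → V → Prop,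
      IsOrientationOf U D₁ ∧ AcyclicRel D₁ ∧ ¬ HasUnshieldedCollider U D₁ ∧
      IsOrientationOf U D₂ ∧ AcyclicRel D₂ ∧ ¬ HasUnshieldedCollider U D₂ ∧
      D₁ A B ∧ D₂ B A := by
  obtain ⟨r₁, _, hr₁, hA⟩ := hchordal.exists_perfectEliminationOrder A
  obtain ⟨r₂, _, hr₂, hB⟩ := hchordal.exists_perfectEliminationOrder B
  exact ⟨U.orient r₁, U.orient r₂,
    U.isOrientationOf_orient, U.acyclicRel_orient, hr₁.not_hasUnshieldedCollider_orient,
    U.isOrientationOf_orient, U.acyclicRel_orient, hr₂.not_hasUnshieldedCollider_orient,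
    ⟨hAB, hA B hAB.ne'⟩, ⟨hAB.symm, hB A hAB.ne⟩⟩
end

section
/- Every directed acyclic graph admits a topological ordering, and for a chordal undirected graph the reverse of a perfect elimination ordering induces an acyclic orientation without unshielded colliders; combining these, for any two adjacent vertices A, B in a chordal graph there exist consistent total orderings α and γ with A < B in α and B < A in γ, each inducing unshielded-collider-free DAGs. -/
/-- The orientation of the undirected graph U induced by a strict total order r has an
unshielded collider. -/
def HasUCWrt {V : Type*} (U : SimpleGraph V) (r : V → V → Prop) : Prop :=
  ∃ a b c, (U.Adj a b ∧ r a b) ∧ (U.Adj c b ∧ r c b) ∧ a ≠ c ∧ ¬ U.Adj a c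

/-!
Part (1) is Szpilrajn's extension theorem applied to the reflexive-transitive closure of the
acyclic relation.

Part (2) rests on Dirac's lemma: if `K` is a clique of a chordal graph and the finite vertex set
`S` is not contained in `K`, some vertex of `S \ K` is simplicial in `S`. If `S` is not a clique,
pick nonadjacent `a, b ∈ S` and let `C` be the component of `a` in `S` minus the closed
neighbourhood of `b`. Every vertex of `S \ C` adjacent to `C` is a neighbour of `b`, and two
nonadjacent such vertices, joined once by a chordless path through `C` and once through `b`,
would span a chordless cycle of length at least 4; so this boundary is a clique, and induction
applies to `C` plus its boundary or to `S \ C`, whichever `K` does not meet.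
Repeatedly removing a simplicial vertex other than `A` ranks every finite `S` with `A` first so
that the lower-ranked neighbours of each vertex form a clique: orienting edges upwards creates no
unshielded collider. A limit of these rankings along an ultrafilter on the finite subsets of `V`
is a strict total order on all of `V` with the same two properties.
-/

theorem Relation.not_transGen_self_of_le {α : Type*} {D r : α → α → Prop} [IsStrictOrder α r]
    (h : ∀ x y, D x y → r x y) (a : α) : ¬ Relation.TransGen D a a := by
  intro ha
  have := Relation.TransGen.mono h a a ha
  rw [Relation.transGen_eq_self] at this
  exact irrefl a this

theorem exists_isStrictTotalOrder_of_not_transGen_self {α : Type*} (D : α → α → Prop)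
    (hD : ¬ ∃ a, Relation.TransGen D a a) :
    ∃ r : α → α → Prop, IsStrictTotalOrder α r ∧ ∀ x y, D x y → r x y := by
  let _ : PartialOrder α :=
    { le := Relation.ReflTransGen D
      le_refl := fun _ => .refl
      le_trans := fun _ _ _ => .trans
      le_antisymm := fun a b hab hba => by
        rcases Relation.reflTransGen_iff_eq_or_transGen.1 hab with h | h
        · exact h.symm
        rcases Relation.reflTransGen_iff_eq_or_transGen.1 hba with h' | h'
        · exact h'
        exact (hD ⟨b, h'.trans h⟩).elim }
  refine ⟨fun x y => toLinearExtension x < toLinearExtension y,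
    inferInstanceAs (IsStrictTotalOrder (LinearExtension α) (· < ·)), fun x y hxy => ?_⟩
  refine (toLinearExtension.monotone (Relation.ReflTransGen.single hxy)).lt_of_ne ?_
  rintro rfl
  exact hD ⟨x, .single hxy⟩

namespace SimpleGraph.Walk
variable {V : Type*} {G : SimpleGraph V} {u v x y : V}

theorem two_le_length_of_adj_of_notMem_edges (p : G.Walk x y) (h : G.Adj x y)
    (he : s(x, y) ∉ p.edges) : 2 ≤ p.length := by
  match p with
  | .nil => exact (G.irrefl h).elim
  | .cons _ .nil => simp at he
  | .cons _ (.cons _ _) => simp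

theorem exists_length_lt_of_mem_support_dropUntil [DecidableEq V] (p : G.Walk u v)
    (hx : x ∈ p.support) (hy : y ∈ (p.dropUntil x hx).support) (h : G.Adj x y)
    (he : s(x, y) ∉ p.edges) :
    ∃ q : G.Walk u v, q.length < p.length ∧ q.support ⊆ p.support := by
  set p₂ := p.dropUntil x hx with hp₂def
  refine ⟨(p.takeUntil x hx).append (cons h (p₂.dropUntil y hy)), ?_, ?_⟩
  · have hp := congrArg length (p.take_spec hx)
    have hp₂ := congrArg length (p₂.take_spec hy)
    have h2 := (p₂.takeUntil y hy).two_le_length_of_adj_of_notMem_edges h fun he' =>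
      he (p.edges_dropUntil_subset_edges hx (p₂.edges_takeUntil_subset_edges hy he'))
    rw [← hp₂def] at hp
    simp only [length_append, length_cons] at hp hp₂ ⊢
    omega
  · intro w hw
    simp only [support_append, support_cons, List.tail_cons, List.mem_append] at hw
    rcases hw with hw | hw
    · exact p.support_takeUntil_subset_support hx hw
    · exact p.support_dropUntil_subset_support hx (p₂.support_dropUntil_subset_support hy hw)

theorem exists_length_lt_of_isChord [DecidableEq V] (p : G.Walk u v) (hc : p.IsChord s(x, y)) :
    ∃ q : G.Walk u v, q.length < p.length ∧ q.support ⊆ p.support := by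
  obtain ⟨h, he, hx, hy⟩ := isChord_sym2Mk.1 hc
  rw [← p.take_spec hx, mem_support_append_iff] at hy
  rcases hy with hy | hy
  · obtain ⟨q, hlen, hsub⟩ := (p.takeUntil x hx).exists_length_lt_of_mem_support_dropUntil hy
      (end_mem_support _) h.symm fun he' =>
        he (Sym2.eq_swap ▸ p.edges_takeUntil_subset_edges hx he')
    refine ⟨q.append (p.dropUntil x hx), ?_, ?_⟩
    · have hp := congrArg length (p.take_spec hx)
      simp only [length_append] at hp ⊢
      omega
    · intro w hw
      rw [mem_support_append_iff] at hw
      rcases hw with hw | hw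
      · exact p.support_takeUntil_subset_support hx (hsub hw)
      · exact p.support_dropUntil_subset_support hx hw
  · exact p.exists_length_lt_of_mem_support_dropUntil hx hy h he

theorem exists_isPath_isChordless_support_subset_s19 (w : G.Walk u v) :
    ∃ p : G.Walk u v, p.IsPath ∧ p.IsChordless ∧ p.support ⊆ w.support := by
  classical
  induction hn : w.length using Nat.strong_induction_on generalizing w with
  | _ n ih =>
  by_cases hc : w.bypass.IsChordless
  · exact ⟨w.bypass, w.bypass_isPath, hc, w.support_bypass_subset_support⟩
  obtain ⟨e, he⟩ : ∃ e, w.bypass.IsChord e := by simpa [IsChordless] using hc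
  induction e using Sym2.ind
  obtain ⟨q, hlen, hsub⟩ := w.bypass.exists_length_lt_of_isChord he
  obtain ⟨p, hp, hpc, hpq⟩ := ih q.length (hn ▸ hlen.trans_le w.length_bypass_le_length) q rfl
  exact ⟨p, hp, hpc, fun z hz => w.support_bypass_subset_support (hsub (hpq hz))⟩

end SimpleGraph.Walk

namespace SimpleGraph
variable {V : Type*} {G : SimpleGraph V} {X : Set V} {a x y : V}

def componentIn (G : SimpleGraph V) (X : Set V) (a : V) : Set V :=
  {x | ∃ p : G.Walk a x, ∀ u ∈ p.support, u ∈ X}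

theorem componentIn_subset : G.componentIn X a ⊆ X :=
  fun x ⟨p, hp⟩ => hp x p.end_mem_support

theorem mem_componentIn_self (ha : a ∈ X) : a ∈ G.componentIn X a :=
  ⟨.nil, by simpa using ha⟩

theorem mem_componentIn_of_adj (hx : x ∈ G.componentIn X a) (hy : y ∈ X) (h : G.Adj x y) :
    y ∈ G.componentIn X a := by
  obtain ⟨p, hp⟩ := hx
  refine ⟨p.concat h, fun u hu => ?_⟩
  rw [Walk.support_concat, List.mem_append, List.mem_singleton] at hu
  rcases hu with hu | rfl
  exacts [hp u hu, hy]

theorem exists_walk_of_mem_componentIn (hx : x ∈ G.componentIn X a)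
    (hy : y ∈ G.componentIn X a) : ∃ p : G.Walk x y, ∀ u ∈ p.support, u ∈ X := by
  obtain ⟨p, hp⟩ := hx
  obtain ⟨q, hq⟩ := hy
  refine ⟨p.reverse.append q, fun u hu => ?_⟩
  rw [Walk.mem_support_append_iff, Walk.support_reverse, List.mem_reverse] at hu
  rcases hu with hu | hu
  exacts [hp u hu, hq u hu]

def IsSimplicialIn (G : SimpleGraph V) (S : Set V) (v : V) : Prop :=
  G.IsClique (S ∩ G.neighborSet v)

theorem IsSimplicialIn.of_neighbors_subset {S S' : Set V} {v : V} (hv : G.IsSimplicialIn S' v)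
    (h : ∀ w ∈ S, G.Adj v w → w ∈ S') : G.IsSimplicialIn S v :=
  IsClique.subset (s := S' ∩ G.neighborSet v) (fun w hw => ⟨h w hw.1 hw.2, hw.2⟩) hv

def IsConsistentRankOn (G : SimpleGraph V) (A : V) (S : Finset V) (σ : V → ℕ) : Prop :=
  Set.InjOn σ S ∧ (A ∈ S → ∀ x ∈ S, x ≠ A → σ A < σ x) ∧
    ∀ a ∈ S, ∀ b ∈ S, ∀ c ∈ S, G.Adj a b → G.Adj c b → σ a < σ b → σ c < σ b → a ≠ c →
      G.Adj a c

theorem IsConsistentRankOn.update_of_isSimplicialIn [DecidableEq V] {A v : V} {S : Finset V}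
    {σ : V → ℕ} (hσ : G.IsConsistentRankOn A (S.erase v) σ) (hvS : v ∈ S)
    (hvA : v ≠ A) (hv : G.IsSimplicialIn S v) :
    G.IsConsistentRankOn A S (Function.update σ v ((S.erase v).sup σ + 1)) := by
  obtain ⟨hinj, hA, hUC⟩ := hσ
  set τ := Function.update σ v ((S.erase v).sup σ + 1)
  have hτ : ∀ x, x ≠ v → τ x = σ x := fun x hx => Function.update_of_ne hx _ _
  have hτv : τ v = (S.erase v).sup σ + 1 := Function.update_self ..
  have hlt : ∀ x ∈ S.erase v, τ x < τ v := fun x hx => by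
    rw [hτ x (Finset.ne_of_mem_erase hx), hτv]
    exact Nat.lt_succ_of_le (Finset.le_sup hx)
  have hne : ∀ x y, y ∈ S → τ x < τ y → x ≠ v := by
    rintro x y hy hxy rfl
    by_cases hyv : y = x
    · exact lt_irrefl _ (hyv ▸ hxy)
    · exact lt_asymm hxy (hlt y (Finset.mem_erase.2 ⟨hyv, hy⟩))
  refine ⟨fun x hx y hy hxy => ?_, fun hAS x hx hxA => ?_,
    fun a ha b hb c hc hab hcb hrab hrcb hac => ?_⟩
  · by_cases hxv : x = v <;> by_cases hyv : y = v
    · exact hxv.trans hyv.symm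
    · subst hxv
      exact absurd hxy.symm (hlt y (Finset.mem_erase.2 ⟨hyv, hy⟩)).ne
    · subst hyv
      exact absurd hxy (hlt x (Finset.mem_erase.2 ⟨hxv, hx⟩)).ne
    · rw [hτ x hxv, hτ y hyv] at hxy
      exact hinj (Finset.mem_erase.2 ⟨hxv, hx⟩) (Finset.mem_erase.2 ⟨hyv, hy⟩) hxy
  · have hAS' := Finset.mem_erase.2 ⟨hvA.symm, hAS⟩
    by_cases hxv : x = v
    · exact hxv ▸ hlt A hAS'
    · rw [hτ A hvA.symm, hτ x hxv]
      exact hA hAS' x (Finset.mem_erase.2 ⟨hxv, hx⟩) hxA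
  · have hav := hne a b hb hrab
    have hcv := hne c b hb hrcb
    by_cases hbv : b = v
    · subst hbv
      exact hv ⟨ha, hab.symm⟩ ⟨hc, hcb.symm⟩ hac
    · rw [hτ a hav, hτ b hbv] at hrab
      rw [hτ c hcv, hτ b hbv] at hrcb
      exact hUC a (Finset.mem_erase.2 ⟨hav, ha⟩) b (Finset.mem_erase.2 ⟨hbv, hb⟩) c
        (Finset.mem_erase.2 ⟨hcv, hc⟩) hab hcb hrab hrcb hac

end SimpleGraph

namespace ChordalGraph
open SimpleGraph Walk
variable {V : Type*} {G : SimpleGraph V}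

theorem adj_of_isChordless (hG : ChordalGraph G) {b y z : V} (p : G.Walk y z) (hp : p.IsPath)
    (hpc : p.IsChordless) (hyz : y ≠ z) (hby : G.Adj b y) (hbz : G.Adj b z)
    (hb : b ∉ p.support) (hbp : ∀ u ∈ p.support, G.Adj b u → u = y ∨ u = z) : G.Adj y z := by
  by_contra hnadj
  have hlen : 2 ≤ p.length := by
    by_contra! h
    interval_cases hl : p.length
    · exact hyz (eq_of_length_eq_zero hl)
    · exact hnadj (adj_of_length_eq_one hl)
  let q : G.Walk z y := cons hbz.symm (cons hby nil)
  have hc : (p.append q).IsCycle := by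
    refine hp.isCycle_append ?_ ?_ (Or.inl (by omega))
    · simp [q, hby.ne, hbz.ne.symm, hyz.symm]
    · have hy : y ∉ p.support.tail := by
        have := hp.support_nodup
        rw [← p.cons_tail_support, List.nodup_cons] at this
        exact this.1
      simpa [q, List.disjoint_right, hy] using fun h => hb (List.mem_of_mem_tail h)
  have hsupp : ∀ u ∈ (p.append q).support, u ∈ p.support ∨ u = b := by
    intro u hu
    simp only [q, mem_support_append_iff, support_cons, support_nil, List.mem_cons,
      List.not_mem_nil, or_false] at hu
    rcases hu with hu | rfl | rfl | rfl
    · exact Or.inl hu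
    · exact Or.inl p.end_mem_support
    · exact Or.inr rfl
    · exact Or.inl p.start_mem_support
  have hbe : ∀ u ∈ p.support, G.Adj b u → s(b, u) ∈ (p.append q).edges := by
    intro u hu hbu
    rcases hbp u hu hbu with rfl | rfl <;> simp [q, Sym2.eq_swap]
  obtain ⟨a, d, ha, hd, had, hne⟩ := hG _ hc (by simp [q]; omega)
  rcases hsupp a ha with hap | rfl <;> rcases hsupp d hd with hdp | rfl
  · exact hne (by simpa using Or.inl (hpc.mem_edges hap hdp had))
  · exact hne (Sym2.eq_swap ▸ hbe a hap had.symm)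
  · exact hne (hbe d hdp had)
  · exact G.irrefl had

theorem adj_of_walk (hG : ChordalGraph G) {b y z : V} (hyz : y ≠ z) (hby : G.Adj b y)
    (hbz : G.Adj b z) (w : G.Walk y z)
    (hw : ∀ u ∈ w.support, u = y ∨ u = z ∨ (u ≠ b ∧ ¬ G.Adj b u)) : G.Adj y z := by
  obtain ⟨p, hp, hpc, hsub⟩ := w.exists_isPath_isChordless_support_subset_s19
  refine hG.adj_of_isChordless p hp hpc hyz hby hbz (fun hb => ?_) fun u hu hbu => ?_
  · rcases hw b (hsub hb) with h | h | h
    exacts [hby.ne h, hbz.ne h, h.1 rfl]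
  · rcases hw u (hsub hu) with h | h | h
    exacts [Or.inl h, Or.inr h, (h.2 hbu).elim]

theorem isClique_of_componentIn (hG : ChordalGraph G) {b : V} {X : Set V}
    (hX : ∀ u ∈ X, u ≠ b ∧ ¬ G.Adj b u) (a : V) :
    G.IsClique {y | G.Adj b y ∧ ∃ c ∈ G.componentIn X a, G.Adj c y} := by
  rintro y ⟨hby, c, hc, hcy⟩ z ⟨hbz, c', hc', hc'z⟩ hyz
  obtain ⟨p, hp⟩ := exists_walk_of_mem_componentIn hc hc'
  refine hG.adj_of_walk hyz hby hbz (.cons hcy.symm (p.concat hc'z)) fun u hu => ?_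
  rw [Walk.support_cons, List.mem_cons, Walk.support_concat, List.mem_append,
    List.mem_singleton] at hu
  rcases hu with rfl | hu | rfl
  exacts [Or.inl rfl, Or.inr (Or.inr (hX u (hp u hu))), Or.inr (Or.inl rfl)]

theorem exists_isClique_boundary (hG : ChordalGraph G) {S : Set V} {a b : V} (ha : a ∈ S)
    (hab : a ≠ b) (hnadj : ¬ G.Adj a b) :
    ∃ C : Set V, a ∈ C ∧ (∀ c ∈ C, c ≠ b ∧ ¬ G.Adj c b) ∧
      G.IsClique {y | y ∈ S ∧ y ∉ C ∧ ∃ c ∈ C, G.Adj c y} := by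
  set X := {u | u ∈ S ∧ u ≠ b ∧ ¬ G.Adj b u}
  have hX : ∀ u ∈ X, u ≠ b ∧ ¬ G.Adj b u := fun u hu => hu.2
  have hCX : G.componentIn X a ⊆ X := componentIn_subset
  refine ⟨G.componentIn X a, mem_componentIn_self ⟨ha, hab, fun h => hnadj h.symm⟩,
    fun c hc => ⟨(hCX hc).2.1, fun h => (hCX hc).2.2 h.symm⟩,
    (hG.isClique_of_componentIn hX a).subset ?_⟩
  rintro y ⟨hyS, hyC, c, hc, hcy⟩
  refine ⟨by_contra fun hby => hyC (mem_componentIn_of_adj hc ⟨hyS, ?_, hby⟩ hcy), c, hc, hcy⟩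
  rintro rfl
  exact (hCX hc).2.2 hcy.symm

theorem exists_isSimplicialIn_notMem (hG : ChordalGraph G) (S : Finset V) {K : Set V}
    (hK : G.IsClique K) (hSK : ∃ x ∈ S, x ∉ K) : ∃ v ∈ S, v ∉ K ∧ G.IsSimplicialIn S v := by
  classical
  induction S using Finset.strongInduction generalizing K with
  | _ S ih =>
  obtain ⟨x, hxS, hxK⟩ := hSK
  by_cases hS : G.IsClique (S : Set V)
  · exact ⟨x, hxS, hxK, hS.subset Set.inter_subset_left⟩
  obtain ⟨a, ha, b, hb, hab, hnadj⟩ : ∃ a ∈ S, ∃ b ∈ S, a ≠ b ∧ ¬ G.Adj a b := by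
    simpa [IsClique, Set.Pairwise] using hS
  obtain ⟨C, haC, hCb, hN⟩ :=
    hG.exists_isClique_boundary (Finset.mem_coe.2 ha) hab hnadj
  set N := {y | y ∈ (S : Set V) ∧ y ∉ C ∧ ∃ c ∈ C, G.Adj c y}
  have hbC : b ∉ C := fun h => (hCb b h).1 rfl
  have hbN : b ∉ N := fun ⟨_, _, c, hc, hcb⟩ => (hCb c hc).2 hcb
  by_cases hKC : ∃ k ∈ K, k ∈ C
  · obtain ⟨k, hkK, hkC⟩ := hKC
    obtain ⟨v, hv, hvN, hsimp⟩ := ih (S.filter (· ∉ C))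
      (Finset.filter_ssubset.2 ⟨a, ha, not_not.2 haC⟩) hN ⟨b, by simp [hb, hbC], hbN⟩
    obtain ⟨hvS, hvC⟩ := Finset.mem_filter.1 hv
    refine ⟨v, hvS, fun hvK => hvN ⟨hvS, hvC, k, hkC, hK hkK hvK ?_⟩, hsimp.of_neighbors_subset ?_⟩
    · rintro rfl
      exact hvC hkC
    · exact fun w hw hvw =>
        Finset.mem_filter.2 ⟨hw, fun hwC => hvN ⟨hvS, hvC, w, hwC, hvw.symm⟩⟩
  · obtain ⟨v, hv, hvN, hsimp⟩ := ih (S.filter (fun u => u ∈ C ∨ u ∈ N))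
      (Finset.filter_ssubset.2 ⟨b, hb, by simp [hbC, hbN]⟩) hN
      ⟨a, by simp [ha, haC], fun haN => haN.2.1 haC⟩
    obtain ⟨hvS, hvCN⟩ := Finset.mem_filter.1 hv
    have hvC : v ∈ C := hvCN.resolve_right hvN
    refine ⟨v, hvS, fun hvK => hKC ⟨v, hvK, hvC⟩, hsimp.of_neighbors_subset fun w hw hvw => ?_⟩
    exact Finset.mem_filter.2 ⟨hw, or_iff_not_imp_left.2 fun hwC => ⟨hw, hwC, v, hvC, hvw⟩⟩

theorem exists_isConsistentRankOn (hG : ChordalGraph G) (A : V) (S : Finset V) :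
    ∃ σ, G.IsConsistentRankOn A S σ := by
  classical
  induction S using Finset.strongInduction with
  | _ S ih =>
  by_cases hSA : ∃ x ∈ S, x ∉ ({A} : Set V)
  · obtain ⟨v, hvS, hvA, hv⟩ := hG.exists_isSimplicialIn_notMem S (G.isClique_singleton A) hSA
    obtain ⟨σ, hσ⟩ := ih (S.erase v) (Finset.erase_ssubset hvS)
    exact ⟨_, hσ.update_of_isSimplicialIn hvS hvA hv⟩
  · have hA : ∀ x ∈ S, x = A := by simpa using hSA
    refine ⟨0, fun x hx y hy _ => (hA x hx).trans (hA y hy).symm,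
      fun _ x hx hxA => (hxA (hA x hx)).elim, fun a ha b hb _ _ hab => ?_⟩
    exact (G.ne_of_adj hab ((hA a ha).trans (hA b hb).symm)).elim

theorem exists_isStrictTotalOrder_not_hasUCWrt (hG : ChordalGraph G) (A : V) :
    ∃ r : V → V → Prop, IsStrictTotalOrder V r ∧ (∀ x, x ≠ A → r A x) ∧ ¬ HasUCWrt G r := by
  classical
  choose σ hσ using hG.exists_isConsistentRankOn A
  let F : Ultrafilter (Finset V) := .of Filter.atTop
  have hmem : ∀ x, ∀ᶠ S in (F : Filter (Finset V)), x ∈ S := fun x =>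
    Ultrafilter.of_le _ ((Filter.eventually_ge_atTop {x}).mono fun S hS =>
      hS (Finset.mem_singleton_self x))
  refine ⟨fun x y => ∀ᶠ S in (F : Filter (Finset V)), σ S x < σ S y,
    { trichotomous := fun x y hxy hyx => ?_, irrefl := fun x hx => ?_,
      trans := fun x y z hxy hyz => (hxy.and hyz).mono fun S h => h.1.trans h.2 }, ?_, ?_⟩
  · by_contra hne
    have : ∀ᶠ S in (F : Filter (Finset V)), σ S x < σ S y ∨ σ S y < σ S x :=
      ((hmem x).and (hmem y)).mono fun S h => lt_or_gt_of_ne fun h' => hne ((hσ S).1 h.1 h.2 h')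
    exact (Ultrafilter.eventually_or.1 this).elim hxy hyx
  · obtain ⟨S, hS⟩ := hx.exists
    exact lt_irrefl _ hS
  · exact fun x hx => ((hmem A).and (hmem x)).mono fun S h => (hσ S).2.1 h.1 x h.2 hx
  · rintro ⟨a, b, c, ⟨hab, hrab⟩, ⟨hcb, hrcb⟩, hac, hnac⟩
    obtain ⟨S, ha, hb, hc, h₁, h₂⟩ :=
      ((hmem a).and ((hmem b).and ((hmem c).and (hrab.and hrcb)))).exists
    exact hnac ((hσ S).2.2 a ha b hb c hc hab hcb h₁ h₂ hac)

end ChordalGraph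

/-- (1) Every directed acyclic graph admits a topological ordering, and
(2) for a chordal undirected graph U and any adjacent vertices A, B there exist
consistent total orders α (with A < B) and γ (with B < A), each of whose induced
orientations of U is an acyclic directed graph without unshielded colliders. -/
theorem stmt19 {V : Type*} (U : SimpleGraph V) :
    (∀ D : V → V → Prop, (¬ ∃ a, Relation.TransGen D a a) →
      ∃ r : V → V → Prop, IsStrictTotalOrder V r ∧ ∀ x y, D x y → r x y) ∧
    (ChordalGraph U → ∀ A B, U.Adj A B →
      ∃ r₁ r₂ : V → V → Prop,
        IsStrictTotalOrder V r₁ ∧ IsStrictTotalOrder V r₂ ∧ r₁ A B ∧ r₂ B A ∧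
        (¬ ∃ a, Relation.TransGen (fun x y => U.Adj x y ∧ r₁ x y) a a) ∧
        ¬ HasUCWrt U r₁ ∧
        (¬ ∃ a, Relation.TransGen (fun x y => U.Adj x y ∧ r₂ x y) a a) ∧
        ¬ HasUCWrt U r₂) := by
  refine ⟨exists_isStrictTotalOrder_of_not_transGen_self, fun hU A B hAB => ?_⟩
  obtain ⟨r₁, h₁, hA, hUC₁⟩ := hU.exists_isStrictTotalOrder_not_hasUCWrt A
  obtain ⟨r₂, h₂, hB, hUC₂⟩ := hU.exists_isStrictTotalOrder_not_hasUCWrt B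
  exact ⟨r₁, r₂, h₁, h₂, hA B hAB.ne.symm, hB A hAB.ne, fun ⟨a, ha⟩ =>
    Relation.not_transGen_self_of_le (fun _ _ h => h.2) a ha, hUC₁, fun ⟨a, ha⟩ =>
    Relation.not_transGen_self_of_le (fun _ _ h => h.2) a ha, hUC₂⟩
end
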